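/- arXiv:2302.11516 — 4 statements merged into one kernel-verified Lean document; each statement's English description precedes it below -/
import Mathlib

section
/- Let z ∈ Im(𝕆') with q(z) = z·z = -1 (i.e. z ∈ 𝐇^{4,2}) and let w ∈ z^⊥ ⊆ Im(𝕆'). Then the map J_z(w) = z × w satisfies J_z² = -Id on z^⊥ and q(J_z(w)) = q(w); i.e. left cross-multiplication by z is a complex structure on z^⊥ compatible with the restricted quadratic form. -/
open scoped Quaternion

noncomputable section

/-- The split quaternions: `j² = -1`, `δ² = ε² = 1`, `j·δ = -δ·j = ε`
(realized as `i, j, k` in `ℍ[ℝ, -1, 1]`). -/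
abbrev H' : Type := ℍ[ℝ, -1, 1]

/-- The split octonions, as pairs of split quaternions (Cayley–Dickson doubling). -/
abbrev SplitOct : Type := H' × H'

namespace SplitOct

/-- Split octonion multiplication:
`(x₁,y₁)·(x₂,y₂) = (x₁x₂ - ȳ₂y₁, y₂x₁ + y₁x̄₂)`. -/
def omul (z w : SplitOct) : SplitOct :=
  (z.1 * w.1 - star w.2 * z.2, w.2 * z.1 + z.2 * star w.1)

scoped infixl:70 " ⬝ " => omul

/-- The unit `1 = (1,0)`. -/
def oone : SplitOct := (1, 0)

/-- Octonion conjugation `(x,y) ↦ (x̄, -y)`. -/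
def oconj (z : SplitOct) : SplitOct := (star z.1, -z.2)

/-- Real part. -/
def oRe (z : SplitOct) : ℝ := z.1.re

/-- Imaginary part, as a split octonion. -/
def oIm (z : SplitOct) : SplitOct := (z.1 - algebraMap ℝ H' z.1.re, z.2)

/-- Membership in the imaginary split octonions `Im(𝕆')`. -/
def IsIm (z : SplitOct) : Prop := z.1.re = 0

/-- The bilinear form `⟨z,w⟩ = Re (z·w)` on imaginary split octonions. -/
def oin (z w : SplitOct) : ℝ := oRe (z ⬝ w)

/-- The cross product `z × w = Im (z·w)`. -/
def ocross (z w : SplitOct) : SplitOct := oIm (z ⬝ w)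

/-- The quadratic form `q(z) = ⟨z,z⟩`. -/
def q (z : SplitOct) : ℝ := oin z z

def j : SplitOct := ((⟨0,1,0,0⟩ : H'), 0)
def δ' : SplitOct := ((⟨0,0,1,0⟩ : H'), 0)
def ε' : SplitOct := ((⟨0,0,0,1⟩ : H'), 0)
def ℓ' : SplitOct := (0, 1)
def jℓ : SplitOct := (0, (⟨0,1,0,0⟩ : H'))
def δℓ : SplitOct := (0, (⟨0,0,1,0⟩ : H'))
def εℓ : SplitOct := (0, (⟨0,0,0,1⟩ : H'))

end SplitOct

/-!
Since `⟨z, w⟩ = Re (z·w) = 0`, the product `z·w` is already imaginary, so `z × w = z·w`.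
Left alternativity gives `z·(z·w) = (z·z)·w = q(z) w = -w`, which yields `⟨z, z × w⟩ = 0` and
`z × (z × w) = -w`. Finally the norm `N(x) = Re (x·x̄)` is multiplicative and `q = -N` on
`Im(𝕆')`, so `q(z·w) = -N(z) N(w) = -q(z) q(w) = q(w)`.
-/

namespace SplitOct

open QuaternionAlgebra

lemma smul_omul (r : ℝ) (x y : SplitOct) : (r • x) ⬝ y = r • (x ⬝ y) := by
  simp only [omul, Prod.smul_fst, Prod.smul_snd, Prod.smul_mk, smul_mul_assoc, mul_smul_comm,
    smul_sub, smul_add]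

lemma oone_omul (x : SplitOct) : oone ⬝ x = x := by
  ext <;> simp [omul, oone]

lemma oIm_smul (r : ℝ) (x : SplitOct) : oIm (r • x) = r • oIm x := by
  ext <;> simp [oIm]

lemma oIm_eq_self {x : SplitOct} (hx : IsIm x) : oIm x = x := by
  ext <;> simp_all [oIm, IsIm]

lemma ocross_eq_omul {z w : SplitOct} (h : oin z w = 0) : ocross z w = z ⬝ w :=
  oIm_eq_self h

lemma omul_self_of_isIm {z : SplitOct} (hz : IsIm z) : z ⬝ z = q z • oone := by
  rw [IsIm] at hz
  ext <;> simp only [q, oin, oRe, omul, oone, Prod.smul_mk, smul_zero, re_sub, re_add, re_mul,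
    re_star, re_smul, re_one, re_zero, imI_sub, imI_add, imI_mul, imI_star, imI_smul, imI_one,
    imI_zero, imJ_sub, imJ_add, imJ_mul, imJ_star, imJ_smul, imJ_one, imJ_zero, imK_sub, imK_add,
    imK_mul, imK_star, imK_smul, imK_one, imK_zero, hz, smul_eq_mul] <;> ring

lemma omul_omul_self_left (z w : SplitOct) : z ⬝ (z ⬝ w) = (z ⬝ z) ⬝ w := by
  ext <;> simp only [omul, re_mul, imI_mul, imJ_mul, imK_mul, re_sub, imI_sub,
    imJ_sub, imK_sub, re_add, imI_add, imJ_add, imK_add, re_star, imI_star, imJ_star, imK_star,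
    star_sub, star_add, star_mul] <;> ring

lemma omul_omul_of_isIm {z : SplitOct} (hz : IsIm z) (w : SplitOct) : z ⬝ (z ⬝ w) = q z • w := by
  rw [omul_omul_self_left, omul_self_of_isIm hz, smul_omul, oone_omul]

def normSq (x : SplitOct) : ℝ := oRe (x ⬝ oconj x)

lemma normSq_omul (x y : SplitOct) : normSq (x ⬝ y) = normSq x * normSq y := by
  simp only [normSq, oRe, omul, oconj, star_sub, star_add, star_mul, star_star, star_neg,
    re_sub, re_add, re_mul, re_star, re_neg, imI_sub, imI_add, imI_mul, imI_star, imI_neg,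
    imJ_sub, imJ_add, imJ_mul, imJ_star, imJ_neg, imK_sub, imK_add, imK_mul, imK_star, imK_neg]
  ring

lemma q_eq_neg_normSq {z : SplitOct} (hz : IsIm z) : q z = -normSq z := by
  rw [IsIm] at hz
  simp only [q, oin, normSq, oRe, omul, oconj, re_sub, re_mul, re_neg, re_star, imI_neg, imI_star,
    imJ_neg, imJ_star, imK_neg, imK_star, hz]
  ring

end SplitOct

open SplitOct in
/-- For `z ∈ 𝐇^{4,2}` (an imaginary split octonion with `q(z) = -1`)
and `w ∈ z^⊥ ⊆ Im(𝕆')`, the map `J_z(w) = z × w` preserves `z^⊥`, satisfies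
`J_z² = -Id` on `z^⊥`, and is compatible with `q`: `q(J_z w) = q(w)`. -/
theorem left_cross_multiplication_complex_structure :
    ∀ z : SplitOct, IsIm z → q z = -1 →
      ∀ w : SplitOct, IsIm w → oin z w = 0 →
        IsIm (ocross z w) ∧ oin z (ocross z w) = 0 ∧
        ocross z (ocross z w) = -w ∧ q (ocross z w) = q w := by
  intro z hz hqz w hw hzw
  have hJw : ocross z w = z ⬝ w := ocross_eq_omul hzw
  have hJJw : z ⬝ (z ⬝ w) = -w := by rw [omul_omul_of_isIm hz, hqz, neg_one_smul]
  refine ⟨?_, ?_, ?_, ?_⟩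
  · simp [IsIm, ocross, oIm]
  · simpa [oin, hJw, hJJw, oRe, IsIm] using hw
  · rw [ocross, hJw, hJJw, ← neg_one_smul ℝ w, oIm_smul, oIm_eq_self hw]
  · have hnz : normSq z = 1 := by linarith [q_eq_neg_normSq hz]
    rw [hJw, q_eq_neg_normSq hzw, normSq_omul, hnz, q_eq_neg_normSq hw, one_mul]
end
end

section
/- For the point δ ∈ 𝐒^{3,3}, the (+1)-eigenspace 𝒟_δ^+ of ψ_δ = δ × (·) on δ^⊥ is spanned by {j - ε, ℓ + δℓ, jℓ + εℓ}, and the restriction of the 3-form Ω(x,y,z) = ⟨x × y, z⟩ to 𝒟_δ^+ is nonzero: Ω(j-ε, ℓ+δℓ, jℓ+εℓ) = -4. -/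
/-!
Write `w = (x, y)` with `x = x₀ + x₁ j + x₂ δ + x₃ ε`. Then `δ·w = (δx, yδ)`, where
`δx = x₂ - x₃ j + x₀ δ - x₁ ε` and right multiplication by `δ` swaps the coordinates of `y` in the
pairs `y₀ ↔ y₂`, `y₁ ↔ y₃`; so the fixed points of `δ × ·` are exactly the combinations of `j - ε`,
`ℓ + δℓ`, `jℓ + εℓ`. Such a fixed point is automatically imaginary and orthogonal to `δ`, because a
cross product `z × w` is always imaginary and, for imaginary `z` and `w`, orthogonal to `z`.
For the value of `Ω`: `(j - ε) × (ℓ + δℓ) = 2 (jℓ - εℓ)` and `⟨jℓ - εℓ, jℓ + εℓ⟩ = q(jℓ) - q(εℓ) = -1 - 1`.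
-/

open scoped Quaternion

noncomputable section

namespace SplitOct

scoped infixl:70 " ⬝ " => omul

end SplitOct

namespace SplitOct

theorem isIm_ocross (z w : SplitOct) : IsIm (ocross z w) := by
  simp [IsIm, ocross, oIm]

theorem oin_ocross_self_left {z w : SplitOct} (hz : IsIm z) (hw : IsIm w) :
    oin z (ocross z w) = 0 := by
  obtain ⟨⟨z₀, z₁, z₂, z₃⟩, u₀, u₁, u₂, u₃⟩ := z
  obtain ⟨⟨w₀, w₁, w₂, w₃⟩, v₀, v₁, v₂, v₃⟩ := w
  simp only [IsIm] at hz hw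
  subst hz hw
  simp [oin, oRe, ocross, oIm, omul, QuaternionAlgebra.re_mul, QuaternionAlgebra.imI_mul,
    QuaternionAlgebra.imJ_mul, QuaternionAlgebra.imK_mul]
  ring

theorem oin_smul_left (c : ℝ) (z w : SplitOct) : oin (c • z) w = c * oin z w := by
  simp [oin, oRe, omul, QuaternionAlgebra.re_mul]
  ring

theorem ocross_δ' (w : SplitOct) :
    ocross δ' w = (⟨0, -w.1.imK, w.1.re, -w.1.imI⟩, ⟨w.2.imJ, w.2.imK, w.2.re, w.2.imI⟩) := by
  ext <;> simp [ocross, oIm, omul, δ', QuaternionAlgebra.re_mul, QuaternionAlgebra.imI_mul,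
    QuaternionAlgebra.imJ_mul, QuaternionAlgebra.imK_mul]

theorem q_δ' : q δ' = 1 := by
  simp [q, oin, oRe, omul, δ']

theorem eigenbasis_combination_eq (a b c : ℝ) :
    a • (j - ε') + b • (ℓ' + δℓ) + c • (jℓ + εℓ) = (⟨0, a, 0, -a⟩, ⟨b, c, b, c⟩) := by
  ext <;> simp [j, ε', ℓ', δℓ, jℓ, εℓ]

theorem ocross_δ'_eq_self_iff (w : SplitOct) :
    ocross δ' w = w ↔ ∃ a b c : ℝ, w = a • (j - ε') + b • (ℓ' + δℓ) + c • (jℓ + εℓ) := by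
  obtain ⟨⟨r, x₁, x₂, x₃⟩, y₀, y₁, y₂, y₃⟩ := w
  simp only [ocross_δ', eigenbasis_combination_eq, Prod.mk.injEq, QuaternionAlgebra.mk.injEq]
  constructor
  · rintro ⟨⟨hr, hx₁, hx₂, hx₃⟩, hy₀, hy₁, -, -⟩
    exact ⟨x₁, y₀, y₁, ⟨hr.symm, rfl, by linarith, by linarith⟩, rfl, rfl, hy₀, hy₁⟩
  · rintro ⟨a, b, c, ⟨rfl, rfl, rfl, rfl⟩, rfl, rfl, rfl, rfl⟩
    simp

theorem ocross_j_sub_ε'_ℓ'_add_δℓ : ocross (j - ε') (ℓ' + δℓ) = (2 : ℝ) • (jℓ - εℓ) := by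
  ext <;> norm_num [ocross, oIm, omul, j, ε', ℓ', δℓ, jℓ, εℓ, QuaternionAlgebra.re_mul,
    QuaternionAlgebra.imI_mul, QuaternionAlgebra.imJ_mul, QuaternionAlgebra.imK_mul]

theorem oin_jℓ_sub_εℓ_jℓ_add_εℓ : oin (jℓ - εℓ) (jℓ + εℓ) = -2 := by
  norm_num [oin, oRe, omul, jℓ, εℓ, QuaternionAlgebra.re_mul]

end SplitOct

open SplitOct in
/-- For the point `δ ∈ 𝐒^{3,3}`, the `(+1)`-eigenspace `𝒟_δ^+` of
`ψ_δ = δ × ·` on `δ^⊥` is spanned by `{j - ε, ℓ + δℓ, jℓ + εℓ}`, and the 3-form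
`Ω(x,y,z) = ⟨x × y, z⟩` restricted to `𝒟_δ^+` is nonzero:
`Ω(j-ε, ℓ+δℓ, jℓ+εℓ) = -4`. -/
theorem eigenspace_at_delta_and_Omega_value :
    q δ' = 1 ∧
    (∀ w : SplitOct,
      (IsIm w ∧ oin δ' w = 0 ∧ ocross δ' w = w) ↔
      (∃ a b c : ℝ, w = a • (j - ε') + b • (ℓ' + δℓ) + c • (jℓ + εℓ))) ∧
    oin (ocross (j - ε') (ℓ' + δℓ)) (jℓ + εℓ) = -4 := by
  refine ⟨q_δ', fun w => ⟨fun h => (ocross_δ'_eq_self_iff w).1 h.2.2, fun h => ?_⟩, ?_⟩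
  · have hfix : ocross δ' w = w := (ocross_δ'_eq_self_iff w).2 h
    have him : IsIm w := hfix ▸ isIm_ocross δ' w
    have hδ : IsIm δ' := by simp [IsIm, δ']
    exact ⟨him, hfix ▸ oin_ocross_self_left hδ him, hfix⟩
  · rw [ocross_j_sub_ε'_ℓ'_add_δℓ, oin_smul_left, oin_jℓ_sub_εℓ_jℓ_add_εℓ]
    norm_num
end
end

section
/- Let f: S → 𝐇^{4,2} be a spacelike holomorphic curve with induced complex structure 𝔧 and second fundamental form II. Then for all vector fields X, Y on S: II(𝔧X, Y) = II(X, 𝔧Y) = 𝐉(II(X,Y)), where 𝐉 is the almost complex structure on 𝐇^{4,2}. Consequently, for a local orthonormal frame (X₁, X₂) with 𝔧X₁ = X₂, one has II(X₂,X₂) = -II(X₁,X₁), so f has vanishing mean curvature. -/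
open scoped Quaternion

noncomputable section

namespace SplitOct

scoped infixl:70 " ⬝ " => omul

end SplitOct

namespace SplitOct

instance : NormedAddCommGroup H' :=
  NormedAddCommGroup.induced H' (Fin 4 → ℝ)
    (QuaternionAlgebra.linearEquivTuple (-1 : ℝ) (0 : ℝ) (1 : ℝ)).toLinearMap
    (LinearEquiv.injective _)

instance : NormedSpace ℝ H' :=
  NormedSpace.induced ℝ H' (Fin 4 → ℝ)
    (QuaternionAlgebra.linearEquivTuple (-1 : ℝ) (0 : ℝ) (1 : ℝ)).toLinearMap

/-- The second derivative of a map `ℂ → Im(𝕆')` in the directions `v, w`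
(the flat ambient derivative `D_w (df(v))`). -/
def D2 (f : ℂ → SplitOct) (p : ℂ) (v w : ℂ) : SplitOct :=
  fderiv ℝ (fun x => fderiv ℝ f x v) p w

/-! Differentiating the holomorphicity identity `df(iv) = f × df(v)` in a direction `w` gives
`D²f(iv, w) = f × D²f(v, w) + df(w) × df(v)`. The last term is tangential-plus-radial: the cross
product of two vectors in the tangent plane is a multiple of `df(1) × df(i) = df(1) × (f × df(1))`,
a combination of `df(1)` and `f` by the double cross product identity. This is
`II(𝔧X, Y) = 𝐉 II(X, Y)`, and symmetry of `D²f` moves `𝔧` to the second slot. Then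
`II(i, i) = 𝐉 II(1, i) = II(1, i·i) = -II(1, 1)`. -/

lemma ocross_add_left (z z' w : SplitOct) : ocross (z + z') w = ocross z w + ocross z' w := by
  ext <;> simp [ocross, oIm, omul, add_mul, mul_add] <;> abel

lemma ocross_add_right (z w w' : SplitOct) : ocross z (w + w') = ocross z w + ocross z w' := by
  ext <;> simp [ocross, oIm, omul, add_mul, mul_add] <;> abel

lemma ocross_smul_left (r : ℝ) (z w : SplitOct) : ocross (r • z) w = r • ocross z w := by
  ext <;> simp [ocross, oIm, omul, mul_sub, Algebra.smul_def] <;> ring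

lemma ocross_smul_right (r : ℝ) (z w : SplitOct) : ocross z (r • w) = r • ocross z w := by
  ext <;> simp [ocross, oIm, omul, mul_sub, Algebra.smul_def] <;> ring

def ocrossL : SplitOct →L[ℝ] SplitOct →L[ℝ] SplitOct :=
  LinearMap.toContinuousLinearMap <| LinearMap.toContinuousLinearMap.toLinearMap ∘ₗ
    LinearMap.mk₂ ℝ ocross ocross_add_left ocross_smul_left ocross_add_right ocross_smul_right

@[simp] lemma ocrossL_apply (z w : SplitOct) : ocrossL z w = ocross z w := rfl

set_option maxHeartbeats 1000000 in
lemma ocross_anticomm {a b : SplitOct} (ha : IsIm a) (hb : IsIm b) :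
    ocross a b = -ocross b a := by
  obtain ⟨⟨r, x1, x2, x3⟩, y⟩ := a
  obtain ⟨⟨s, z1, z2, z3⟩, w⟩ := b
  simp only [IsIm] at ha hb
  subst ha hb
  ext <;> simp [ocross, oIm, omul, QuaternionAlgebra.re_mul, QuaternionAlgebra.imI_mul,
    QuaternionAlgebra.imJ_mul, QuaternionAlgebra.imK_mul] <;> ring

lemma ocross_self {a : SplitOct} (ha : IsIm a) : ocross a a = 0 := by
  have h := ocross_anticomm ha ha
  rw [← sub_eq_zero, sub_neg_eq_add, ← two_smul ℝ] at h
  exact (smul_eq_zero.1 h).resolve_left two_ne_zero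

set_option maxHeartbeats 4000000 in
lemma ocross_ocross_self {u v : SplitOct} (hu : IsIm u) (hv : IsIm v) :
    ocross u (ocross v u) = oin u v • u - q u • v := by
  obtain ⟨⟨r, x1, x2, x3⟩, ⟨y0, y1, y2, y3⟩⟩ := u
  obtain ⟨⟨s, z1, z2, z3⟩, ⟨w0, w1, w2, w3⟩⟩ := v
  simp only [IsIm] at hu hv
  subst hu hv
  ext <;> simp [ocross, oIm, oin, oRe, q, omul, QuaternionAlgebra.re_mul,
    QuaternionAlgebra.imI_mul, QuaternionAlgebra.imJ_mul, QuaternionAlgebra.imK_mul] <;> ring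

lemma ocross_mem_span_of_mem_span_pair {a b u v : SplitOct} (ha : IsIm a) (hb : IsIm b)
    (hu : u ∈ Submodule.span ℝ {a, b}) (hv : v ∈ Submodule.span ℝ {a, b}) :
    ocross u v ∈ Submodule.span ℝ {ocross a b} := by
  obtain ⟨r, s, rfl⟩ := Submodule.mem_span_pair.1 hu
  obtain ⟨r', s', rfl⟩ := Submodule.mem_span_pair.1 hv
  refine Submodule.mem_span_singleton.2 ⟨r * s' - s * r', ?_⟩
  simp only [ocross_add_left, ocross_add_right, ocross_smul_left, ocross_smul_right,
    ocross_self ha, ocross_self hb, ocross_anticomm hb ha]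
  module

def reCLM : SplitOct →L[ℝ] ℝ :=
  LinearMap.toContinuousLinearMap
    { toFun := fun z => z.1.re, map_add' := fun _ _ => rfl, map_smul' := fun _ _ => rfl }

lemma isIm_fderiv {E : Type*} [NormedAddCommGroup E] [NormedSpace ℝ E] {g : E → SplitOct}
    (hg : ∀ x, IsIm (g x)) (x v : E) : IsIm (fderiv ℝ g x v) := by
  by_cases hd : DifferentiableAt ℝ g x
  · have h := reCLM.hasFDerivAt.comp x hd.hasFDerivAt
    rw [show ⇑reCLM ∘ g = fun _ => 0 from funext hg] at h
    exact congrArg (· v) (h.unique (hasFDerivAt_const 0 x))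
  · simp [fderiv_zero_of_not_differentiableAt hd, IsIm]

lemma fderiv_ocross_apply {E : Type*} [NormedAddCommGroup E] [NormedSpace ℝ E]
    {g h : E → SplitOct} {x : E} (hg : DifferentiableAt ℝ g x) (hh : DifferentiableAt ℝ h x)
    (w : E) : fderiv ℝ (fun y => ocross (g y) (h y)) x w =
      ocross (g x) (fderiv ℝ h x w) + ocross (fderiv ℝ g x w) (h x) := by
  simpa using congrArg (· w) (ocrossL.fderiv_of_bilinear hg hh)

lemma _root_.ContinuousLinearMap.apply_mem_span_one_I {E : Type*} [AddCommGroup E]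
    [Module ℝ E] [TopologicalSpace E] (L : ℂ →L[ℝ] E) (v : ℂ) :
    L v ∈ Submodule.span ℝ {L 1, L Complex.I} := by
  refine Submodule.mem_span_pair.2 ⟨v.re, v.im, ?_⟩
  rw [← map_smul, ← map_smul, ← map_add]
  congr 1
  apply Complex.ext <;> simp

lemma D2_eq_fderiv_fderiv {f : ℂ → SplitOct} {p : ℂ} (hf : DifferentiableAt ℝ (fderiv ℝ f) p)
    (v w : ℂ) : D2 f p v w = fderiv ℝ (fderiv ℝ f) p w v := by
  rw [D2, fderiv_clm_apply hf (differentiableAt_const v)]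
  simp

lemma D2_comm {f : ℂ → SplitOct} {p : ℂ} (hf : ContDiffAt ℝ 2 f p) (v w : ℂ) :
    D2 f p v w = D2 f p w v := by
  have hd : DifferentiableAt ℝ (fderiv ℝ f) p :=
    (hf.fderiv_right (m := 1) le_rfl).differentiableAt one_ne_zero
  rw [D2_eq_fderiv_fderiv hd, D2_eq_fderiv_fderiv hd, hf.isSymmSndFDerivAt (by simp) w v]

section HolomorphicCurve

variable {f : ℂ → SplitOct}

lemma ocross_fderiv_mem_span (hIm : ∀ p, IsIm (f p))
    (hhol : ∀ p v, fderiv ℝ f p (Complex.I * v) = ocross (f p) (fderiv ℝ f p v)) (p v w : ℂ) :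
    ocross (fderiv ℝ f p v) (fderiv ℝ f p w) ∈
      Submodule.span ℝ {f p, fderiv ℝ f p 1, fderiv ℝ f p Complex.I} := by
  have hplane := ocross_mem_span_of_mem_span_pair (isIm_fderiv hIm p 1)
    (isIm_fderiv hIm p Complex.I) ((fderiv ℝ f p).apply_mem_span_one_I v)
    ((fderiv ℝ f p).apply_mem_span_one_I w)
  refine Submodule.span_le.2 (Set.singleton_subset_iff.2 ?_) hplane
  have hI : fderiv ℝ f p Complex.I = ocross (f p) (fderiv ℝ f p 1) := by simpa using hhol p 1
  rw [hI, ocross_ocross_self (isIm_fderiv hIm p 1) (hIm p)]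
  exact sub_mem (Submodule.smul_mem _ _ (Submodule.subset_span (by simp)))
    (Submodule.smul_mem _ _ (Submodule.subset_span (by simp)))

lemma D2_I_mul_left (hf : ContDiff ℝ 2 f)
    (hhol : ∀ p v, fderiv ℝ f p (Complex.I * v) = ocross (f p) (fderiv ℝ f p v)) (p v w : ℂ) :
    D2 f p (Complex.I * v) w =
      ocross (f p) (D2 f p v w) + ocross (fderiv ℝ f p w) (fderiv ℝ f p v) := by
  have hdf : DifferentiableAt ℝ (fun x => fderiv ℝ f x v) p :=
    ((hf.fderiv_right (m := 1) (by norm_num)).differentiable one_ne_zero p).clm_apply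
      (differentiableAt_const v)
  rw [D2, funext (hhol · v), fderiv_ocross_apply (hf.differentiable two_ne_zero p) hdf, D2]

end HolomorphicCurve

/-- `II` is read off the ambient second derivative `D2 f p` modulo the radial direction `f p` and
the tangent plane. -/
theorem second_fundamental_form_commutes_with_J_general
    (f : ℂ → SplitOct) (hf : ContDiff ℝ ⊤ f)
    (hIm : ∀ p, IsIm (f p))
    (hhol : ∀ p v, fderiv ℝ f p (Complex.I * v) = ocross (f p) (fderiv ℝ f p v)) :
    ∀ (p : ℂ) (X Y : ℂ),
      D2 f p (Complex.I * X) Y - ocross (f p) (D2 f p X Y) ∈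
        Submodule.span ℝ {f p, fderiv ℝ f p 1, fderiv ℝ f p Complex.I} ∧
      D2 f p X (Complex.I * Y) - ocross (f p) (D2 f p X Y) ∈
        Submodule.span ℝ {f p, fderiv ℝ f p 1, fderiv ℝ f p Complex.I} ∧
      D2 f p 1 1 + D2 f p Complex.I Complex.I ∈
        Submodule.span ℝ {f p, fderiv ℝ f p 1, fderiv ℝ f p Complex.I} := by
  intro p
  have hf₂ : ContDiff ℝ 2 f := hf.of_le le_top
  have hJ_left : ∀ X Y, D2 f p (Complex.I * X) Y - ocross (f p) (D2 f p X Y) ∈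
      Submodule.span ℝ {f p, fderiv ℝ f p 1, fderiv ℝ f p Complex.I} := fun X Y => by
    rw [D2_I_mul_left hf₂ hhol, add_sub_cancel_left]
    exact ocross_fderiv_mem_span hIm hhol p Y X
  have hJ_right : ∀ X Y, D2 f p X (Complex.I * Y) - ocross (f p) (D2 f p X Y) ∈
      Submodule.span ℝ {f p, fderiv ℝ f p 1, fderiv ℝ f p Complex.I} := fun X Y => by
    rw [D2_comm hf₂.contDiffAt X, D2_comm hf₂.contDiffAt X Y]
    exact hJ_left Y X
  have hII : D2 f p 1 (Complex.I * Complex.I) = -D2 f p 1 1 := by simp [D2]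
  intro X Y
  refine ⟨hJ_left X Y, hJ_right X Y, ?_⟩
  convert sub_mem (hJ_left 1 Complex.I) (hJ_right 1 Complex.I) using 1
  rw [hII, mul_one]
  abel

/-- Let `f` be a spacelike holomorphic curve in `𝐇^{4,2}` (written in a
local conformal coordinate `z ∈ ℂ`, so that the induced complex structure `𝔧` is
multiplication by `i` and `df ∘ 𝔧 = 𝐉 ∘ df` where `𝐉_z = z × ·`). Then the second
fundamental form `II` (the component of the ambient second derivative normal to the
surface inside `T𝐇^{4,2}`) satisfies `II(𝔧X,Y) = II(X,𝔧Y) = 𝐉(II(X,Y))`: modulo the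
span of `f(p)` (the radial direction) and of `∂₁f, ∂₂f` (the tangent plane), the
second derivative in directions `(𝔧X, Y)` or `(X, 𝔧Y)` equals `𝐉` of the one in
directions `(X,Y)`. Consequently `II(X₂,X₂) = -II(X₁,X₁)` for an orthonormal frame
with `𝔧X₁ = X₂`, i.e. `f` has vanishing mean curvature: the Laplacian
`D²f(1,1) + D²f(i,i)` is tangential-plus-radial. -/
theorem second_fundamental_form_commutes_with_J
    (f : ℂ → SplitOct) (hf : ContDiff ℝ ⊤ f)
    (hIm : ∀ p, IsIm (f p)) (hq : ∀ p, q (f p) = -1)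
    (hhol : ∀ p v, fderiv ℝ f p (Complex.I * v) = ocross (f p) (fderiv ℝ f p v))
    (himm : ∀ p, fderiv ℝ f p 1 ≠ 0)
    (hspacelike : ∀ p (v : ℂ), v ≠ 0 → 0 < oin (fderiv ℝ f p v) (fderiv ℝ f p v)) :
    ∀ (p : ℂ) (X Y : ℂ),
      D2 f p (Complex.I * X) Y - ocross (f p) (D2 f p X Y) ∈
        Submodule.span ℝ {f p, fderiv ℝ f p 1, fderiv ℝ f p Complex.I} ∧
      D2 f p X (Complex.I * Y) - ocross (f p) (D2 f p X Y) ∈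
        Submodule.span ℝ {f p, fderiv ℝ f p 1, fderiv ℝ f p Complex.I} ∧
      D2 f p 1 1 + D2 f p Complex.I Complex.I ∈
        Submodule.span ℝ {f p, fderiv ℝ f p 1, fderiv ℝ f p Complex.I} :=
  second_fundamental_form_commutes_with_J_general f hf hIm hhol

end SplitOct
end
end

section
/- Let X be a compact Riemann surface of genus g ≥ 2, and for g ≤ d ≤ 6g-6 consider triples (ℬ, β, δ) with ℬ a degree-d line bundle, β ∈ H⁰(ℬ^{-1}𝒦³) \ {0}, δ ∈ H⁰(ℬ²), modulo the ℂ*-action λ·(ℬ,β,δ) = (ℬ, λβ, λ^{-2}δ). Then the map [(ℬ,β,δ)] ↦ (div(β), β²δ) is a bijection onto the total space of the bundle over Sym^{6g-6-d}(X) whose fiber over a divisor D is H⁰(𝒦⁶(-2D)); this fiber has dimension 2d - g + 1. -/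
noncomputable section

namespace RS

/-- Divisors on (the points of) a compact Riemann surface: finitely supported
ℤ-valued functions. -/
abbrev Div (X : Type*) := X →₀ ℤ

/-- The degree of a divisor. -/
def degD {X : Type*} (D : Div X) : ℤ := D.sum fun _ n => n

/-- Effective divisors. -/
def Eff {X : Type*} (D : Div X) : Prop := ∀ x, 0 ≤ D x

/-- Abstract data of a compact Riemann surface of genus `g`: its points `X`, its field
`F` of meromorphic functions (a ℂ-algebra), the divisor map `dv` on nonzero functions,
a canonical divisor `K` (the divisor class of the canonical bundle `𝒦`), and for each
divisor `D` the space `H0 D = H⁰(X, 𝒪(D))` of global holomorphic sections of the line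
bundle `𝒪(D)`; a line bundle of degree `d` is represented by a divisor of degree `d`,
tensor product by sum of divisors and dual by negation. -/
structure RSData where
  X : Type
  F : Type
  [fieldF : Field F]
  [algF : Algebra ℂ F]
  g : ℕ
  dv : F → Div X
  K : Div X
  H0 : Div X → Submodule ℂ F
  hg : 2 ≤ g
  hK : degD K = 2 * (g : ℤ) - 2
  hdv_mul : ∀ f h : F, f ≠ 0 → h ≠ 0 → dv (f * h) = dv f + dv h
  hdv_one : dv 1 = 0
  hdv_const : ∀ c : ℂ, c ≠ 0 → dv (algebraMap ℂ F c) = 0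
  hdv_deg : ∀ f : F, f ≠ 0 → degD (dv f) = 0
  hH0 : ∀ (D : Div X) (f : F),
    f ∈ H0 D ↔ (f = 0 ∨ (f ≠ 0 ∧ ∀ x, 0 ≤ dv f x + D x))

attribute [instance] RSData.fieldF RSData.algF

end RS

namespace RS

variable (R : RSData) (d : ℤ)

/-- A triple `(ℬ, β, δ)`: a line bundle `ℬ` of degree `d` (represented by a divisor),
a nonzero section `β ∈ H⁰(ℬ⁻¹𝒦³)`, and a section `δ ∈ H⁰(ℬ²)`. -/
def Triple : Type :=
  {t : Div R.X × R.F × R.F //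
    degD t.1 = d ∧ t.2.1 ∈ R.H0 (3 • R.K - t.1) ∧ t.2.1 ≠ 0 ∧ t.2.2 ∈ R.H0 (2 • t.1)}

/-- The equivalence on triples generated by isomorphism of the line bundle `ℬ`
(change of the representing divisor by a principal divisor `div f`, transforming the
sections accordingly) together with the `ℂ*`-action `λ·(ℬ,β,δ) = (ℬ, λβ, λ⁻²δ)`. -/
def Rel (t t' : Triple R d) : Prop :=
  ∃ (f : R.F) (lam : ℂ), f ≠ 0 ∧ lam ≠ 0 ∧
    t'.1.1 = t.1.1 + R.dv f ∧
    t'.1.2.1 = algebraMap ℂ R.F lam * f * t.1.2.1 ∧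
    t'.1.2.2 = ((algebraMap ℂ R.F lam)⁻¹) ^ 2 * (f⁻¹) ^ 2 * t.1.2.2

/-- The divisor `div(β)` of the section `β` of `ℬ⁻¹𝒦³`: an effective divisor of degree
`6g - 6 - d`, i.e. a point of `Sym^{6g-6-d}(X)`. -/
def DvMap (t : Triple R d) : Div R.X := R.dv t.1.2.1 + 3 • R.K - t.1.1

/-- The holomorphic differential `β²δ` of degree 6. -/
def ThMap (t : Triple R d) : R.F := t.1.2.1 ^ 2 * t.1.2.2

-- auxiliary lemmas
lemma degD_add' {X : Type*} (A B : Div X) : degD (A + B) = degD A + degD B :=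
  Finsupp.sum_add_index' (fun _ => rfl) (fun _ _ _ => rfl)

lemma degD_zero' {X : Type*} : degD (0 : Div X) = 0 := Finsupp.sum_zero_index

lemma degD_neg' {X : Type*} (A : Div X) : degD (-A) = - degD A := by
  have h : degD (-A) + degD A = 0 := by rw [← degD_add']; simp [degD_zero']
  linarith

lemma degD_sub' {X : Type*} (A B : Div X) : degD (A - B) = degD A - degD B := by
  rw [sub_eq_add_neg, degD_add', degD_neg']; ring

lemma degD_nsmul' {X : Type*} (n : ℕ) (A : Div X) : degD (n • A) = n * degD A := by
  induction n with
  | zero => simp [degD_zero']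
  | succ k ih => rw [succ_nsmul, degD_add', ih]; push_cast; ring

lemma dv_inv (R : RSData) {f : R.F} (hf : f ≠ 0) : R.dv f⁻¹ = - R.dv f := by
  have h := R.hdv_mul f f⁻¹ hf (inv_ne_zero hf)
  rw [mul_inv_cancel₀ hf, R.hdv_one] at h
  have h' : R.dv f + R.dv f⁻¹ = 0 := h.symm
  ext x
  have := DFunLike.congr_fun h' x
  simp [Finsupp.add_apply] at this ⊢
  omega

lemma zero_mem_H0 (R : RSData) (D : Div R.X) : (0 : R.F) ∈ R.H0 D :=
  (R.hH0 D 0).mpr (Or.inl rfl)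

lemma mem_H0_of_ne (R : RSData) {D : Div R.X} {f : R.F} (hf : f ≠ 0)
    (h : ∀ x, 0 ≤ R.dv f x + D x) : f ∈ R.H0 D :=
  (R.hH0 D f).mpr (Or.inr ⟨hf, h⟩)

lemma algebraMap_ne_zero' (R : RSData) {c : ℂ} (hc : c ≠ 0) :
    algebraMap ℂ R.F c ≠ 0 := by
  intro h
  exact hc ((algebraMap ℂ R.F).injective (by rw [h, map_zero]))

/-- For `g ≤ d ≤ 6g - 6`, the map `[(ℬ,β,δ)] ↦ (div β, β²δ)` is a
bijection from triples modulo the `ℂ*`-action onto the total space of the bundle over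
`Sym^{6g-6-d}(X)` whose fiber over a divisor `D` is `H⁰(𝒦⁶(-2D))`; this fiber has
dimension `2d - g + 1` (by Riemann–Roch and Serre duality). -/
theorem moduli_parametrization
    (hd1 : (R.g : ℤ) ≤ d) (hd2 : d ≤ 6 * (R.g : ℤ) - 6)
    -- Riemann–Roch (plus Serre duality) in the range where H¹ vanishes
    (hRR : ∀ D : Div R.X, 2 * (R.g : ℤ) - 2 < degD D →
      (Module.finrank ℂ (R.H0 D) : ℤ) = degD D - R.g + 1) :
    -- the map lands in the stated bundle
    (∀ t : Triple R d,
      Eff (DvMap R d t) ∧ degD (DvMap R d t) = 6 * (R.g : ℤ) - 6 - d ∧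
      ThMap R d t ∈ R.H0 (6 • R.K - 2 • DvMap R d t)) ∧
    -- it is injective precisely on equivalence classes (descends to an injection)
    (∀ t t' : Triple R d,
      (DvMap R d t = DvMap R d t' ∧ ThMap R d t = ThMap R d t') ↔ Rel R d t t') ∧
    -- it is surjective onto the total space of the bundle
    (∀ D : Div R.X, Eff D → degD D = 6 * (R.g : ℤ) - 6 - d →
      ∀ θ ∈ R.H0 (6 • R.K - 2 • D),
        ∃ t : Triple R d, DvMap R d t = D ∧ ThMap R d t = θ) ∧
    -- the fiber of the bundle has dimension 2d - g + 1
    (∀ D : Div R.X, Eff D → degD D = 6 * (R.g : ℤ) - 6 - d →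
      (Module.finrank ℂ (R.H0 (6 • R.K - 2 • D)) : ℤ) = 2 * d - R.g + 1) := by
  have key1 : ∀ t : Triple R d,
      Eff (DvMap R d t) ∧ degD (DvMap R d t) = 6 * (R.g : ℤ) - 6 - d ∧
      ThMap R d t ∈ R.H0 (6 • R.K - 2 • DvMap R d t) := by
    rintro ⟨⟨B, beta, delta⟩, hdeg, hbeta, hbne, hdelta⟩
    have hb := ((R.hH0 _ beta).mp hbeta).resolve_left hbne
    refine ⟨?_, ?_, ?_⟩
    · intro x
      have := hb.2 x
      simp only [DvMap, Finsupp.sub_apply, Finsupp.add_apply] at this ⊢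
      omega
    · simp only [DvMap, degD_sub', degD_add', degD_nsmul', R.hdv_deg beta hbne, R.hK, hdeg]
      push_cast; ring
    · rcases eq_or_ne delta 0 with hd0 | hd0
      · have h0 : ThMap R d ⟨⟨B, beta, delta⟩, hdeg, hbeta, hbne, hdelta⟩ = 0 := by
          simp [ThMap, hd0]
        rw [h0]; exact zero_mem_H0 R _
      · have hθ : beta ^ 2 * delta ≠ 0 := mul_ne_zero (pow_ne_zero _ hbne) hd0
        have hdvθ : R.dv (beta ^ 2 * delta) = R.dv beta + R.dv beta + R.dv delta := by
          rw [sq, R.hdv_mul _ _ (mul_ne_zero hbne hbne) hd0, R.hdv_mul _ _ hbne hbne]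
        have hdel := ((R.hH0 _ delta).mp hdelta).resolve_left hd0
        refine mem_H0_of_ne R hθ ?_
        intro x
        have h1 := hdel.2 x
        simp only [DvMap, ThMap, hdvθ, Finsupp.sub_apply, Finsupp.add_apply,
          Finsupp.smul_apply, smul_eq_mul, nsmul_eq_mul, Nat.cast_ofNat] at h1 ⊢
        omega
  refine ⟨key1, ?_, ?_, ?_⟩
  · rintro ⟨⟨B, beta, delta⟩, hdeg, hbeta, hbne, hdelta⟩
      ⟨⟨B', beta', delta'⟩, hdeg', hbeta', hbne', hdelta'⟩
    constructor
    · rintro ⟨hDv, hTh⟩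
      simp only [DvMap, ThMap] at hDv hTh
      refine ⟨beta' * beta⁻¹, 1, mul_ne_zero hbne' (inv_ne_zero hbne), one_ne_zero,
        ?_, ?_, ?_⟩
      · show B' = B + R.dv (beta' * beta⁻¹)
        have hdvf : R.dv (beta' * beta⁻¹) = R.dv beta' - R.dv beta := by
          rw [R.hdv_mul _ _ hbne' (inv_ne_zero hbne), dv_inv R hbne, sub_eq_add_neg]
        rw [hdvf]
        ext x
        have := DFunLike.congr_fun hDv x
        simp only [Finsupp.sub_apply, Finsupp.add_apply] at this ⊢
        omega
      · show beta' = algebraMap ℂ R.F 1 * (beta' * beta⁻¹) * beta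
        rw [map_one, one_mul, mul_assoc, inv_mul_cancel₀ hbne, mul_one]
      · show delta' = ((algebraMap ℂ R.F 1)⁻¹) ^ 2 * ((beta' * beta⁻¹)⁻¹) ^ 2 * delta
        rw [map_one, inv_one, one_pow, one_mul]
        field_simp
        linear_combination -hTh
    · rintro ⟨f, lam, hf, hlam, hB, hbeta2, hdelta2⟩
      have hc : algebraMap ℂ R.F lam ≠ 0 := algebraMap_ne_zero' R hlam
      simp only [DvMap, ThMap] at hB hbeta2 hdelta2 ⊢
      constructor
      · rw [hbeta2, hB, R.hdv_mul _ _ (mul_ne_zero hc hf) hbne,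
          R.hdv_mul _ _ hc hf, R.hdv_const lam hlam]
        ext x
        simp only [Finsupp.sub_apply, Finsupp.add_apply, Finsupp.zero_apply]
        omega
      · rw [hbeta2, hdelta2]
        field_simp
  · intro D hD hDdeg θ hθ
    have h3KD : (3 : ℕ) • R.K - ((3 : ℕ) • R.K - D) = D := by
      ext x; simp only [Finsupp.sub_apply]; omega
    have h2B : (2 : ℕ) • ((3 : ℕ) • R.K - D) = 6 • R.K - 2 • D := by
      ext x
      simp only [Finsupp.sub_apply, Finsupp.smul_apply, smul_eq_mul, nsmul_eq_mul,
        Nat.cast_ofNat]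
      omega
    have hBdeg : degD ((3 : ℕ) • R.K - D) = d := by
      rw [degD_sub', degD_nsmul', R.hK, hDdeg]; push_cast; ring
    have h1mem : (1 : R.F) ∈ R.H0 ((3 : ℕ) • R.K - ((3 : ℕ) • R.K - D)) := by
      rw [h3KD]
      refine mem_H0_of_ne R one_ne_zero ?_
      intro x
      have := hD x
      rw [R.hdv_one]
      simp only [Finsupp.zero_apply]
      omega
    have hθmem : θ ∈ R.H0 ((2 : ℕ) • ((3 : ℕ) • R.K - D)) := by rw [h2B]; exact hθ
    refine ⟨⟨⟨(3 : ℕ) • R.K - D, 1, θ⟩, hBdeg, h1mem, one_ne_zero, hθmem⟩, ?_, ?_⟩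
    · show R.dv 1 + (3 : ℕ) • R.K - ((3 : ℕ) • R.K - D) = D
      rw [R.hdv_one]
      ext x
      simp only [Finsupp.sub_apply, Finsupp.add_apply, Finsupp.zero_apply]
      omega
    · show (1 : R.F) ^ 2 * θ = θ
      rw [one_pow, one_mul]
  · intro D hD hDdeg
    have hdeg6 : degD (6 • R.K - 2 • D) = 2 * d := by
      rw [degD_sub', degD_nsmul', degD_nsmul', R.hK, hDdeg]; push_cast; ring
    have hg := R.hg
    have := hRR (6 • R.K - 2 • D) (by rw [hdeg6]; push_cast at hd1 ⊢; omega)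
    rw [hdeg6] at this
    omega

end RS
end
end
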